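/- The Schouten–Jacobi bracket [[X,Y]]^Φ = [[X,Y]] + xX∧i_Φ Y - (-1)^x y i_Φ X∧Y associated with a Lie algebroid E and 1-cocycle Φ is a graded Lie bracket on A(E): it is graded antisymmetric ([[X,Y]]^Φ = -(-1)^{xy}[[Y,X]]^Φ) and satisfies the graded Jacobi identity [[[[X,Y]]^Φ, Z]]^Φ = [[X,[[Y,Z]]^Φ]]^Φ - (-1)^{xy}[[Y,[[X,Z]]^Φ]]^Φ. -/

import Mathlib

/-- Abstract model of the graded commutative algebra `A(E)` of multivector fields /
multisections of a Lie algebroid, equipped with the wedge product and the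
Schouten–Nijenhuis bracket (sign convention: graded Lie bracket for the degree
shifted by one).  `H p X` means `X` is homogeneous of (multivector) degree `p`. -/
structure SchoutenAlgebra (V : Type*) [AddCommGroup V] [Module ℝ V] where
  wedge : V →ₗ[ℝ] V →ₗ[ℝ] V
  bracket : V →ₗ[ℝ] V →ₗ[ℝ] V
  H : ℤ → V → Prop
  one : V
  h_one : H 0 one
  wedge_one : ∀ X : V, wedge one X = X
  wedge_assoc : ∀ X Y Z : V, wedge (wedge X Y) Z = wedge X (wedge Y Z)
  wedge_comm : ∀ {p q : ℤ} {X Y : V}, H p X → H q Y →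
    wedge X Y = (Int.negOnePow (p * q) : ℤ) • wedge Y X
  wedge_mem : ∀ {p q : ℤ} {X Y : V}, H p X → H q Y → H (p + q) (wedge X Y)
  bracket_mem : ∀ {p q : ℤ} {X Y : V}, H p X → H q Y → H (p + q - 1) (bracket X Y)
  bracket_antisymm : ∀ {p q : ℤ} {X Y : V}, H p X → H q Y →
    bracket X Y = -((Int.negOnePow ((p - 1) * (q - 1)) : ℤ) • bracket Y X)
  bracket_jacobi : ∀ {p q : ℤ} {X Y : V}, H p X → H q Y → ∀ Z : V,
    bracket (bracket X Y) Z =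
      bracket X (bracket Y Z) -
        (Int.negOnePow ((p - 1) * (q - 1)) : ℤ) • bracket Y (bracket X Z)
  bracket_leibniz : ∀ {p q : ℤ} {X Y : V}, H p X → H q Y → ∀ Z : V,
    bracket X (wedge Y Z) =
      wedge (bracket X Y) Z + (Int.negOnePow ((p - 1) * q) : ℤ) • wedge Y (bracket X Z)

/-- The Schouten–Jacobi bracket `[[X,Y]]^Φ = [[X,Y]] + x X∧i_Φ Y - (-1)^x y i_Φ X∧Y`
associated with a Lie algebroid and a 1-cocycle `Φ` (contraction `iφ`), for `X`
of multivector degree `p` (shifted degree `x = p-1`) and `Y` of degree `q`. -/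
def brPhi {V : Type*} [AddCommGroup V] [Module ℝ V] (S : SchoutenAlgebra V)
    (iφ : V →ₗ[ℝ] V) (p q : ℤ) (X Y : V) : V :=
  S.bracket X Y + (p - 1) • S.wedge X (iφ Y)
    - ((Int.negOnePow (p - 1) : ℤ) * (q - 1)) • S.wedge (iφ X) Y

/-!
Write `[[X,Y]]^Φ = [[X,Y]] + σ(X,Y)` with `σ(X,Y) = x X∧i_Φ Y - (-1)^x y i_Φ X∧Y`
(`contrBracket`). Since `i_Φ` is a derivation of `∧` with `i_Φ² = 0`, `σ` is itself a graded Lie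
bracket; since `dΦ = 0` makes `i_Φ` a derivation of `[[·,·]]`, the mixed Jacobiator of `[[·,·]]`
and `σ` vanishes. The Jacobiator of the sum is the sum of these three, the first vanishing by the
Jacobi identity of `[[·,·]]`.

Every sign `(-1)^n` involved depends only on the parities of the degrees, so after a case split
on them each identity becomes a linear identity with constant signs.
-/

lemma Int.coe_negOnePow_eq_ite (n : ℤ) : (n.negOnePow : ℤ) = if Even n then 1 else -1 := by
  split_ifs with h
  · simp [Int.negOnePow_even n h]
  · simp [Int.negOnePow_odd n (Int.not_even_iff_odd.1 h)]

namespace SchoutenAlgebra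

variable {V : Type*} [AddCommGroup V] [Module ℝ V] (S : SchoutenAlgebra V)

lemma wedge_left_comm {p q : ℤ} {X Y : V} (hX : S.H p X) (hY : S.H q Y) (Z : V) :
    S.wedge X (S.wedge Y Z) = (Int.negOnePow (p * q) : ℤ) • S.wedge Y (S.wedge X Z) := by
  rw [← S.wedge_assoc, S.wedge_comm hX hY, map_zsmul, LinearMap.smul_apply, S.wedge_assoc]

lemma bracket_wedge_left {p q r : ℤ} {X Y Z : V} (hX : S.H p X) (hY : S.H q Y) (hZ : S.H r Z) :
    S.bracket (S.wedge X Y) Z = S.wedge X (S.bracket Y Z) +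
      (Int.negOnePow (q * (r - 1)) : ℤ) • S.wedge (S.bracket X Z) Y := by
  rw [S.bracket_antisymm (S.wedge_mem hX hY) hZ, S.bracket_leibniz hZ hX Y,
    S.bracket_antisymm hZ hX, S.bracket_antisymm hZ hY]
  simp only [map_neg, map_zsmul, LinearMap.neg_apply, LinearMap.smul_apply, smul_add, smul_neg,
    smul_smul]
  rcases em (Even p) with hp | hp <;> rcases em (Even q) with hq | hq <;>
    rcases em (Even r) with hr | hr <;>
    simp +decide only [Int.coe_negOnePow_eq_ite, Int.even_add, Int.even_sub, Int.even_mul, hp, hq,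
      hr, if_true, if_false] <;>
    module

def contrBracket (iφ : V →ₗ[ℝ] V) (p q : ℤ) : V →ₗ[ℝ] V →ₗ[ℝ] V :=
  (p - 1) • S.wedge.compl₂ iφ - ((Int.negOnePow (p - 1) : ℤ) * (q - 1)) • S.wedge ∘ₗ iφ

lemma brPhi_eq_bracket_add (iφ : V →ₗ[ℝ] V) (p q : ℤ) (X Y : V) :
    brPhi S iφ p q X Y = S.bracket X Y + S.contrBracket iφ p q X Y := by
  simp only [brPhi, contrBracket, add_sub_assoc, LinearMap.sub_apply, LinearMap.smul_apply,
    LinearMap.compl₂_apply, LinearMap.comp_apply]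

variable {S} {iφ : V →ₗ[ℝ] V}

lemma contrBracket_antisymm (hiφ_mem : ∀ {p : ℤ} {X : V}, S.H p X → S.H (p - 1) (iφ X))
    {p q : ℤ} {X Y : V} (hX : S.H p X) (hY : S.H q Y) :
    S.contrBracket iφ p q X Y =
      -((Int.negOnePow ((p - 1) * (q - 1)) : ℤ) • S.contrBracket iφ q p Y X) := by
  simp only [contrBracket, LinearMap.sub_apply, LinearMap.smul_apply, LinearMap.compl₂_apply,
    LinearMap.comp_apply, S.wedge_comm hY (hiφ_mem hX), S.wedge_comm (hiφ_mem hY) hX, smul_sub,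
    smul_smul]
  rcases em (Even p) with hp | hp <;> rcases em (Even q) with hq | hq <;>
    simp +decide only [Int.coe_negOnePow_eq_ite, Int.even_sub, Int.even_mul, hp, hq, if_true,
      if_false] <;>
    module

lemma contrBracket_jacobi (hiφ_mem : ∀ {p : ℤ} {X : V}, S.H p X → S.H (p - 1) (iφ X))
    (hiφ_der : ∀ {p : ℤ} {X : V}, S.H p X → ∀ Y : V,
      iφ (S.wedge X Y) = S.wedge (iφ X) Y + (Int.negOnePow p : ℤ) • S.wedge X (iφ Y))
    (hiφ2 : ∀ X : V, iφ (iφ X) = 0)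
    {p q r : ℤ} {X Y : V} (hX : S.H p X) (hY : S.H q Y) (Z : V) :
    S.contrBracket iφ (p + q - 1) r (S.contrBracket iφ p q X Y) Z =
      S.contrBracket iφ p (q + r - 1) X (S.contrBracket iφ q r Y Z) -
        (Int.negOnePow ((p - 1) * (q - 1)) : ℤ) •
          S.contrBracket iφ q (p + r - 1) Y (S.contrBracket iφ p r X Z) := by
  simp only [contrBracket, LinearMap.sub_apply, LinearMap.smul_apply, LinearMap.compl₂_apply,
    LinearMap.comp_apply, map_sub, map_zsmul, map_add, LinearMap.add_apply, hiφ_der hX,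
    hiφ_der hY, hiφ_der (hiφ_mem hX), hiφ_der (hiφ_mem hY), hiφ2, map_zero, LinearMap.zero_apply,
    S.wedge_assoc, S.wedge_left_comm hY (hiφ_mem hX), S.wedge_left_comm (hiφ_mem hY) hX,
    S.wedge_left_comm (hiφ_mem hY) (hiφ_mem hX), smul_add, smul_sub, smul_smul, smul_zero,
    add_zero]
  rcases em (Even p) with hp | hp <;> rcases em (Even q) with hq | hq <;>
    simp +decide only [Int.coe_negOnePow_eq_ite, Int.even_add, Int.even_sub, Int.even_mul, hp, hq,
      if_true, if_false] <;>
    module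

lemma bracket_contrBracket_jacobi (hiφ_mem : ∀ {p : ℤ} {X : V}, S.H p X → S.H (p - 1) (iφ X))
    (hcocycle : ∀ {p : ℤ} {X : V}, S.H p X → ∀ Y : V,
      iφ (S.bracket X Y) =
        S.bracket (iφ X) Y + (Int.negOnePow (p - 1) : ℤ) • S.bracket X (iφ Y))
    {p q r : ℤ} {X Y Z : V} (hX : S.H p X) (hY : S.H q Y) (hZ : S.H r Z) :
    S.bracket (S.contrBracket iφ p q X Y) Z + S.contrBracket iφ (p + q - 1) r (S.bracket X Y) Z =
      S.bracket X (S.contrBracket iφ q r Y Z) + S.contrBracket iφ p (q + r - 1) X (S.bracket Y Z) -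
        (Int.negOnePow ((p - 1) * (q - 1)) : ℤ) •
          (S.bracket Y (S.contrBracket iφ p r X Z) +
            S.contrBracket iφ q (p + r - 1) Y (S.bracket X Z)) := by
  simp only [contrBracket, LinearMap.sub_apply, LinearMap.smul_apply, LinearMap.compl₂_apply,
    LinearMap.comp_apply, map_sub, map_zsmul, map_add, LinearMap.add_apply,
    S.bracket_wedge_left hX (hiφ_mem hY) hZ, S.bracket_wedge_left (hiφ_mem hX) hY hZ,
    S.bracket_leibniz hX hY, S.bracket_leibniz hX (hiφ_mem hY),
    S.bracket_leibniz hY hX, S.bracket_leibniz hY (hiφ_mem hX),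
    S.bracket_antisymm hY hX, S.bracket_antisymm hY (hiφ_mem hX), hcocycle hX, hcocycle hY,
    S.wedge_comm (S.bracket_mem hX hZ) (hiφ_mem hY),
    S.wedge_comm (S.bracket_mem (hiφ_mem hX) hZ) hY,
    map_neg, LinearMap.neg_apply, smul_add, smul_sub, smul_neg, smul_smul]
  rcases em (Even p) with hp | hp <;> rcases em (Even q) with hq | hq <;>
    rcases em (Even r) with hr | hr <;>
    simp +decide only [Int.coe_negOnePow_eq_ite, Int.even_add, Int.even_sub, Int.even_mul, hp, hq,
      hr, if_true, if_false] <;>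
    module

end SchoutenAlgebra

/-- The Schouten–Jacobi bracket `[[·,·]]^Φ` associated with a Lie
algebroid `E` and a 1-cocycle `Φ` (`dΦ = 0`, expressed through the hypotheses
on the contraction `iφ`) is a graded Lie bracket on `A(E)` for the shifted
degrees `x = |X|-1`:  it is graded antisymmetric and satisfies the graded
Jacobi identity. -/
theorem schouten_jacobi_graded_lie {V : Type*} [AddCommGroup V] [Module ℝ V]
    (S : SchoutenAlgebra V) (iφ : V →ₗ[ℝ] V)
    (hiφ_mem : ∀ {p : ℤ} {X : V}, S.H p X → S.H (p - 1) (iφ X))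
    (hiφ_der : ∀ {p : ℤ} {X : V}, S.H p X → ∀ Y : V,
      iφ (S.wedge X Y) = S.wedge (iφ X) Y + (Int.negOnePow p : ℤ) • S.wedge X (iφ Y))
    (hiφ2 : ∀ X : V, iφ (iφ X) = 0)
    (hcocycle : ∀ {p : ℤ} {X : V}, S.H p X → ∀ Y : V,
      iφ (S.bracket X Y) =
        S.bracket (iφ X) Y + (Int.negOnePow (p - 1) : ℤ) • S.bracket X (iφ Y))
    {p q r : ℤ} (X Y Z : V) (hX : S.H p X) (hY : S.H q Y) (hZ : S.H r Z) :
    brPhi S iφ p q X Y =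
        -((Int.negOnePow ((p - 1) * (q - 1)) : ℤ) • brPhi S iφ q p Y X) ∧
      brPhi S iφ (p + q - 1) r (brPhi S iφ p q X Y) Z =
        brPhi S iφ p (q + r - 1) X (brPhi S iφ q r Y Z)
          - (Int.negOnePow ((p - 1) * (q - 1)) : ℤ) •
              brPhi S iφ q (p + r - 1) Y (brPhi S iφ p r X Z) := by
  simp only [S.brPhi_eq_bracket_add, map_add, LinearMap.add_apply]
  constructor
  · rw [S.bracket_antisymm hX hY, SchoutenAlgebra.contrBracket_antisymm hiφ_mem hX hY, smul_add,
      neg_add]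
  · linear_combination (norm := module) S.bracket_jacobi hX hY Z +
      SchoutenAlgebra.bracket_contrBracket_jacobi hiφ_mem hcocycle hX hY hZ +
      SchoutenAlgebra.contrBracket_jacobi hiφ_mem hiφ_der hiφ2 hX hY Z
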